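/- arXiv:1710.04444 — 4 statements merged into one kernel-verified Lean document; each statement's English description precedes it below -/
import Mathlib

section
/- Let f : T → T' be an injective graded ring homomorphism between connected graded S-rings, and X an S-subbimodule of T. Then R_{f(X)} = f(R_X), where R_Z := ⊕_n (LH(Z) ∩ T^n) is the bimodule of leading homogeneous parts. -/
variable {T : Type*} [Ring T]

/-- Projection onto the degree `n` homogeneous component. -/
noncomputable def projFun (𝒜 : ℕ → AddSubgroup T) [GradedRing 𝒜] (n : ℕ) (x : T) : T :=
  (DirectSum.decompose 𝒜 x n : T)

lemma projFun_add (𝒜 : ℕ → AddSubgroup T) [GradedRing 𝒜] (n : ℕ) (x y : T) :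
    projFun 𝒜 n (x + y) = projFun 𝒜 n x + projFun 𝒜 n y := by
  unfold projFun
  rw [DirectSum.decompose_add, DirectSum.add_apply, AddSubgroup.coe_add]

lemma projFun_neg (𝒜 : ℕ → AddSubgroup T) [GradedRing 𝒜] (n : ℕ) (x : T) :
    projFun 𝒜 n (-x) = - projFun 𝒜 n x := by
  unfold projFun
  rw [DirectSum.decompose_neg, DFinsupp.neg_apply, AddSubgroup.coe_neg]

/-- The `S`-subbimodule `T^{≤ n}` of elements of degree at most `n`. -/
noncomputable def degLE (𝒜 : ℕ → AddSubgroup T) [GradedRing 𝒜] (n : ℕ) : AddSubgroup T where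
  carrier := {x | ∀ m, n < m → projFun 𝒜 m x = 0}
  zero_mem' := by
    intro m hm
    unfold projFun
    rw [DirectSum.decompose_zero, DirectSum.zero_apply, AddSubgroup.coe_zero]
  add_mem' := by
    intro a b ha hb m hm
    rw [projFun_add, ha m hm, hb m hm, add_zero]
  neg_mem' := by
    intro a ha m hm
    rw [projFun_neg, ha m hm, neg_zero]

/-- `y` is the leading homogeneous part of `x`. -/
def IsLH (𝒜 : ℕ → AddSubgroup T) [GradedRing 𝒜] (x y : T) : Prop :=
  (x = 0 ∧ y = 0) ∨
    ∃ m, y = projFun 𝒜 m x ∧ y ≠ 0 ∧ ∀ k, m < k → projFun 𝒜 k x = 0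

/-- `LH(X)`, the set of leading homogeneous parts of elements of `X`. -/
def leadSet (𝒜 : ℕ → AddSubgroup T) [GradedRing 𝒜] (X : Set T) : Set T :=
  {y | ∃ x ∈ X, IsLH 𝒜 x y}

/-- An additive subgroup of `T` which is an `S = T^0`-subbimodule. -/
def IsSubbimodule (𝒜 : ℕ → AddSubgroup T) (X : AddSubgroup T) : Prop :=
  ∀ s ∈ 𝒜 0, ∀ x ∈ X, s * x ∈ X ∧ x * s ∈ X

/-- `T` is strongly graded: `T^{n+1} = T^1 T^n`. -/
def StronglyGraded (𝒜 : ℕ → AddSubgroup T) : Prop :=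
  ∀ n, (𝒜 (n + 1) : Set T) ⊆
    ↑(AddSubgroup.closure {y : T | ∃ a ∈ 𝒜 1, ∃ b ∈ 𝒜 n, y = a * b})

/-- `R_X`, the graded subbimodule generated by the leading homogeneous parts of `X`. -/
noncomputable def leadSub (𝒜 : ℕ → AddSubgroup T) [GradedRing 𝒜] (X : Set T) : AddSubgroup T :=
  AddSubgroup.closure (⋃ n, leadSet 𝒜 X ∩ (𝒜 n : Set T))

/-! An injective graded map commutes with the homogeneous projections and reflects the grading
(`f⁻¹(ℬ n) = 𝒜 n`). Hence the leading homogeneous parts of `f(X)` are exactly the images of those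
of `X`, degree by degree, and `f` maps the subgroup they generate onto the one generated by the
images. -/

section GradedMap

variable {T' : Type*} [Ring T'] {𝒜 : ℕ → AddSubgroup T} [GradedRing 𝒜]
  {ℬ : ℕ → AddSubgroup T'} [GradedRing ℬ]
  {F : Type*} [FunLike F T T'] [AddMonoidHomClass F T T'] {f : F}

lemma projFun_mem (n : ℕ) (x : T) : projFun 𝒜 n x ∈ 𝒜 n :=
  SetLike.coe_mem _

lemma projFun_of_mem {n : ℕ} {x : T} (hx : x ∈ 𝒜 n) : projFun 𝒜 n x = x :=
  DirectSum.decompose_of_mem_same 𝒜 hx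

lemma projFun_of_mem_ne {m n : ℕ} {x : T} (hx : x ∈ 𝒜 n) (hnm : n ≠ m) : projFun 𝒜 m x = 0 :=
  DirectSum.decompose_of_mem_ne 𝒜 hx hnm

lemma map_projFun (hgraded : ∀ n, ∀ x ∈ 𝒜 n, f x ∈ ℬ n) (n : ℕ) (x : T) :
    f (projFun 𝒜 n x) = projFun ℬ n (f x) := by
  induction x using DirectSum.Decomposition.inductionOn 𝒜 with
  | zero => simp [projFun]
  | @homogeneous i x =>
      rcases eq_or_ne i n with rfl | hin
      · rw [projFun_of_mem x.2, projFun_of_mem (hgraded i x x.2)]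
      · rw [projFun_of_mem_ne x.2 hin, map_zero, projFun_of_mem_ne (hgraded i x x.2) hin]
  | add a b ha hb => simp only [projFun_add, map_add, ha, hb]

variable (hinj : Function.Injective f) (hgraded : ∀ n, ∀ x ∈ 𝒜 n, f x ∈ ℬ n)
include hinj hgraded

lemma preimage_graded_of_injective (n : ℕ) : f ⁻¹' (ℬ n : Set T') = 𝒜 n := by
  ext x
  refine ⟨fun hx => ?_, hgraded n x⟩
  have : f (projFun 𝒜 n x) = f x := by rw [map_projFun hgraded, projFun_of_mem hx]
  exact hinj this ▸ projFun_mem n x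

lemma projFun_map_eq_zero_iff (n : ℕ) (x : T) : projFun ℬ n (f x) = 0 ↔ projFun 𝒜 n x = 0 := by
  rw [← map_projFun hgraded, map_eq_zero_iff f hinj]

lemma IsLH.map {x y : T} (h : IsLH 𝒜 x y) : IsLH ℬ (f x) (f y) := by
  rcases h with ⟨rfl, rfl⟩ | ⟨m, rfl, hy0, htop⟩
  · exact Or.inl ⟨map_zero f, map_zero f⟩
  · refine Or.inr ⟨m, map_projFun hgraded m x, (map_ne_zero_iff f hinj).2 hy0, fun k hk => ?_⟩
    exact (projFun_map_eq_zero_iff hinj hgraded k x).2 (htop k hk)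

lemma IsLH.exists_of_map {x : T} {y' : T'} (h : IsLH ℬ (f x) y') :
    ∃ y, IsLH 𝒜 x y ∧ f y = y' := by
  rcases h with ⟨hx0, rfl⟩ | ⟨m, rfl, hy0, htop⟩
  · exact ⟨0, Or.inl ⟨(map_eq_zero_iff f hinj).1 hx0, rfl⟩, map_zero f⟩
  · refine ⟨projFun 𝒜 m x, Or.inr ⟨m, rfl, ?_, fun k hk => ?_⟩, map_projFun hgraded m x⟩
    · rwa [Ne, ← projFun_map_eq_zero_iff hinj hgraded]
    · exact (projFun_map_eq_zero_iff hinj hgraded k x).1 (htop k hk)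

lemma leadSet_image (X : Set T) : leadSet ℬ (f '' X) = f '' leadSet 𝒜 X := by
  ext y'
  constructor
  · rintro ⟨_, ⟨x, hxX, rfl⟩, hLH⟩
    obtain ⟨y, hy, rfl⟩ := hLH.exists_of_map hinj hgraded
    exact ⟨y, ⟨x, hxX, hy⟩, rfl⟩
  · rintro ⟨y, ⟨x, hxX, hy⟩, rfl⟩
    exact ⟨f x, ⟨x, hxX, rfl⟩, hy.map hinj hgraded⟩

lemma leadSub_image (X : Set T) :
    leadSub ℬ (f '' X) = (leadSub 𝒜 X).map (f : T →+ T') := by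
  have hgen : ∀ n, leadSet ℬ (f '' X) ∩ ℬ n = f '' (leadSet 𝒜 X ∩ 𝒜 n) := fun n => by
    rw [leadSet_image hinj hgraded, ← Set.image_inter_preimage,
      preimage_graded_of_injective hinj hgraded]
  simp only [leadSub, hgen, ← Set.image_iUnion, AddMonoidHom.map_closure]
  rfl

end GradedMap

theorem stmt_2_general {T' : Type*} [Ring T'] (𝒜 : ℕ → AddSubgroup T) [GradedRing 𝒜]
    (ℬ : ℕ → AddSubgroup T') [GradedRing ℬ]
    (f : T →+* T') (hinj : Function.Injective f)
    (hgraded : ∀ n, ∀ x ∈ 𝒜 n, f x ∈ ℬ n)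
    (X : AddSubgroup T) :
    leadSub ℬ (f '' (X : Set T))
      = AddSubgroup.map f.toAddMonoidHom (leadSub 𝒜 (X : Set T)) :=
  leadSub_image hinj hgraded (X : Set T)

/-- Lemma 1.3 (2): `R_{f(X)} = f(R_X)` for an injective graded morphism `f`. -/
theorem stmt_2 {T' : Type*} [Ring T'] (𝒜 : ℕ → AddSubgroup T) [GradedRing 𝒜]
    (ℬ : ℕ → AddSubgroup T') [GradedRing ℬ]
    (f : T →+* T') (hinj : Function.Injective f)
    (hgraded : ∀ n, ∀ x ∈ 𝒜 n, f x ∈ ℬ n)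
    (X : AddSubgroup T) (hX : IsSubbimodule 𝒜 X) :
    leadSub ℬ (f '' (X : Set T))
      = AddSubgroup.map f.toAddMonoidHom (leadSub 𝒜 (X : Set T)) :=
  stmt_2_general 𝒜 ℬ f hinj hgraded X
end

section
/- Let P' ⊆ P be submodules of T with filtrations F^n P' ⊆ F^n P ⊆ T^{≤n}, where the filtration {F^n P} is jacobian (i.e. F^{n+1}P ∩ T^{≤n} ⊆ F^n P for all n). Then F^n P' = F^n P for all n if and only if p^n(F^n P') = p^n(F^n P) for all n, where p^n is the projection onto T^n. -/
variable {T : Type*} [Ring T]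

section degLE

variable {𝒜 : ℕ → AddSubgroup T} [GradedRing 𝒜]

lemma projFun_sub (n : ℕ) (x y : T) :
    projFun 𝒜 n (x - y) = projFun 𝒜 n x - projFun 𝒜 n y := by
  rw [sub_eq_add_neg, projFun_add, projFun_neg, sub_eq_add_neg]

lemma eq_zero_of_forall_projFun_eq_zero {x : T} (h : ∀ m, projFun 𝒜 m x = 0) : x = 0 := by
  classical
  rw [← DirectSum.sum_support_decompose 𝒜 x]
  exact Finset.sum_eq_zero fun i _ => h i

lemma projFun_sub_eq_zero_of_le {n : ℕ} {x y : T} (hx : x ∈ degLE 𝒜 n) (hy : y ∈ degLE 𝒜 n)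
    (hxy : projFun 𝒜 n x = projFun 𝒜 n y) {m : ℕ} (hm : n ≤ m) :
    projFun 𝒜 m (x - y) = 0 := by
  rw [projFun_sub]
  rcases hm.eq_or_lt with rfl | hlt
  · exact sub_eq_zero.2 hxy
  · rw [hx m hlt, hy m hlt, sub_zero]

lemma eq_of_mem_degLE_zero {x y : T} (hx : x ∈ degLE 𝒜 0) (hy : y ∈ degLE 𝒜 0)
    (hxy : projFun 𝒜 0 x = projFun 𝒜 0 y) : x = y :=
  sub_eq_zero.1 <| eq_zero_of_forall_projFun_eq_zero fun m =>
    projFun_sub_eq_zero_of_le hx hy hxy m.zero_le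

lemma sub_mem_degLE_of_projFun_eq {n : ℕ} {x y : T} (hx : x ∈ degLE 𝒜 (n + 1))
    (hy : y ∈ degLE 𝒜 (n + 1)) (hxy : projFun 𝒜 (n + 1) x = projFun 𝒜 (n + 1) y) :
    x - y ∈ degLE 𝒜 n :=
  fun _ hm => projFun_sub_eq_zero_of_le hx hy hxy hm

end degLE

theorem stmt_9_general (𝒜 : ℕ → AddSubgroup T) [GradedRing 𝒜]
    (F F' : ℕ → AddSubgroup T)
    (hmonoF' : Monotone F')
    (hle : ∀ n, F' n ≤ F n) (hdeg : ∀ n, F n ≤ degLE 𝒜 n)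
    (hjac : ∀ n, F (n + 1) ⊓ degLE 𝒜 n ≤ F n) :
    (∀ n, F' n = F n)
      ↔ ∀ n, projFun 𝒜 n '' (F' n : Set T) = projFun 𝒜 n '' (F n : Set T) := by
  refine ⟨fun h n => by rw [h n], fun h n => ?_⟩
  have lift : ∀ n, ∀ x ∈ F n, projFun 𝒜 n x ∈ projFun 𝒜 n '' (F' n : Set T) :=
    fun n x hx => h n ▸ Set.mem_image_of_mem _ hx
  induction n with
  | zero =>
    refine le_antisymm (hle 0) fun x hx => ?_
    obtain ⟨x', hx', hproj⟩ := lift 0 x hx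
    rwa [eq_of_mem_degLE_zero (hdeg 0 hx) (hdeg 0 (hle 0 hx')) hproj.symm]
  | succ n ih =>
    refine le_antisymm (hle _) fun x hx => ?_
    obtain ⟨x', hx', hproj⟩ := lift (n + 1) x hx
    -- `x - x'` drops into degree `≤ n`, where the jacobian property and `F' n = F n` apply.
    have hlow : x - x' ∈ F' n := ih ▸ hjac n (AddSubgroup.mem_inf.2 ⟨sub_mem hx (hle _ hx'),
      sub_mem_degLE_of_projFun_eq (hdeg _ hx) (hdeg _ (hle _ hx')) hproj.symm⟩)
    simpa using add_mem (hmonoF' n.le_succ hlow) hx'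

/-- Lemma 2.6. -/
theorem stmt_9 (𝒜 : ℕ → AddSubgroup T) [GradedRing 𝒜]
    (F F' : ℕ → AddSubgroup T)
    (hbiF : ∀ n, IsSubbimodule 𝒜 (F n)) (hbiF' : ∀ n, IsSubbimodule 𝒜 (F' n))
    (hmonoF : Monotone F) (hmonoF' : Monotone F')
    (hle : ∀ n, F' n ≤ F n) (hdeg : ∀ n, F n ≤ degLE 𝒜 n)
    (hjac : ∀ n, F (n + 1) ⊓ degLE 𝒜 n ≤ F n) :
    (∀ n, F' n = F n)
      ↔ ∀ n, projFun 𝒜 n '' (F' n : Set T) = projFun 𝒜 n '' (F n : Set T) :=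
  stmt_9_general 𝒜 F F' hmonoF' hle hdeg hjac
end

section
/- A graded S-subbimodule R of a connected graded S-ring T generates the graded ideal I if and only if R + Ĩ = I, where Ĩ := I T^1 + T^1 I. -/
/-!
If `R` generates `I`, every product `a r b` with `r ∈ R` splits into homogeneous pieces
`aᵢ r bⱼ`; the piece with `i = j = 0` lies in `R` because `R` is an `S`-bimodule, and every
other piece lies in `Ĩ` because strong grading factors `T^{k+1}` through `T^1`.
Conversely, if `R + Ĩ = I`, a homogeneous `x ∈ I` of degree `n` is `rₙ + yₙ` with `r ∈ R`,
`y ∈ Ĩ`, and the degree-`n` part of an element of `Ĩ` is a combination of products of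
elements of `T^1` with homogeneous elements of `I` of degree `n - 1`, so induction on `n`
puts `x` into the ideal generated by `R`.
-/

variable {T : Type*} [Ring T]

/-- The subgroup `I·T^1 + T^1·I`. -/
noncomputable def tildeI (𝒜 : ℕ → AddSubgroup T) (I : Set T) : AddSubgroup T :=
  AddSubgroup.closure
    ({y : T | ∃ a ∈ I, ∃ b ∈ 𝒜 1, y = a * b} ∪ {y : T | ∃ a ∈ 𝒜 1, ∃ b ∈ I, y = a * b})

open DirectSum

section tildeI

variable {𝒜 : ℕ → AddSubgroup T}

theorem tildeI_le {I : Set T} {G : AddSubgroup T} (hright : ∀ a ∈ I, ∀ b ∈ 𝒜 1, a * b ∈ G)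
    (hleft : ∀ a ∈ 𝒜 1, ∀ b ∈ I, a * b ∈ G) : tildeI 𝒜 I ≤ G :=
  (AddSubgroup.closure_le _).2 <| Set.union_subset
    (by rintro _ ⟨a, ha, b, hb, rfl⟩; exact hright a ha b hb)
    (by rintro _ ⟨a, ha, b, hb, rfl⟩; exact hleft a ha b hb)

theorem mul_mem_tildeI_of_right_mem_one {I : Set T} {a b : T} (ha : a ∈ I) (hb : b ∈ 𝒜 1) :
    a * b ∈ tildeI 𝒜 I :=
  AddSubgroup.subset_closure (Or.inl ⟨a, ha, b, hb, rfl⟩)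

theorem mul_mem_tildeI_of_left_mem_one {I : Set T} {a b : T} (ha : a ∈ 𝒜 1) (hb : b ∈ I) :
    a * b ∈ tildeI 𝒜 I :=
  AddSubgroup.subset_closure (Or.inr ⟨a, ha, b, hb, rfl⟩)

theorem tildeI_le_ofClass (I : TwoSidedIdeal T) :
    tildeI 𝒜 (I : Set T) ≤ AddSubgroup.ofClass I :=
  tildeI_le (fun a ha b _ => I.mul_mem_right a b ha)
    (fun a _ b hb => I.mul_mem_left a b hb)

namespace StronglyGraded

variable (hsg : StronglyGraded 𝒜) {I : TwoSidedIdeal T}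
include hsg

theorem mul_mem_tildeI_of_left_mem_succ {k : ℕ} {a x : T} (ha : a ∈ 𝒜 (k + 1))
    (hx : x ∈ I) : a * x ∈ tildeI 𝒜 (I : Set T) := by
  have hle : AddSubgroup.closure {y : T | ∃ c ∈ 𝒜 1, ∃ d ∈ 𝒜 k, y = c * d} ≤
      (tildeI 𝒜 (I : Set T)).comap (AddMonoidHom.mulRight x) := by
    refine (AddSubgroup.closure_le _).2 ?_
    rintro _ ⟨c, hc, d, -, rfl⟩
    change c * d * x ∈ tildeI 𝒜 (I : Set T)
    rw [mul_assoc]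
    exact mul_mem_tildeI_of_left_mem_one hc (I.mul_mem_left d x hx)
  exact hle (hsg k ha)

theorem mul_mem_tildeI_of_right_mem_succ {m : ℕ} {x b : T} (hx : x ∈ I)
    (hb : b ∈ 𝒜 (m + 1)) : x * b ∈ tildeI 𝒜 (I : Set T) := by
  induction m generalizing x b with
  | zero => exact mul_mem_tildeI_of_right_mem_one hx hb
  | succ m ih =>
    have hle : AddSubgroup.closure {y : T | ∃ c ∈ 𝒜 1, ∃ d ∈ 𝒜 (m + 1), y = c * d} ≤
        (tildeI 𝒜 (I : Set T)).comap (AddMonoidHom.mulLeft x) := by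
      refine (AddSubgroup.closure_le _).2 ?_
      rintro _ ⟨c, -, d, hd, rfl⟩
      change x * (c * d) ∈ tildeI 𝒜 (I : Set T)
      rw [← mul_assoc]
      exact ih (I.mul_mem_right x c hx) hd
    exact hle (hsg (m + 1) hb)

variable {R : AddSubgroup T} (hR : IsSubbimodule 𝒜 R) (hRI : (R : Set T) ⊆ I)
include hR hRI

theorem mul_mul_mem_sup_tildeI_of_mem {i j : ℕ} {a r b : T} (ha : a ∈ 𝒜 i) (hr : r ∈ R)
    (hb : b ∈ 𝒜 j) : a * r * b ∈ R ⊔ tildeI 𝒜 (I : Set T) := by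
  rcases i with _ | k
  · have har : a * r ∈ R := (hR a ha r hr).1
    rcases j with _ | m
    · exact AddSubgroup.mem_sup_left (hR b hb _ har).2
    · exact AddSubgroup.mem_sup_right (hsg.mul_mem_tildeI_of_right_mem_succ (hRI har) hb)
  · rw [mul_assoc]
    exact AddSubgroup.mem_sup_right
      (hsg.mul_mem_tildeI_of_left_mem_succ ha (I.mul_mem_right r b (hRI hr)))

variable [GradedRing 𝒜]

theorem mul_mul_mem_sup_tildeI {r : T} (hr : r ∈ R) (a b : T) :
    a * r * b ∈ R ⊔ tildeI 𝒜 (I : Set T) := by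
  induction a using Decomposition.inductionOn 𝒜 with
  | zero => simp
  | add a a' ha ha' => rw [add_mul, add_mul]; exact add_mem ha ha'
  | homogeneous a =>
    induction b using Decomposition.inductionOn 𝒜 with
    | zero => simp
    | add b b' hb hb' => rw [mul_add]; exact add_mem hb hb'
    | homogeneous b => exact hsg.mul_mul_mem_sup_tildeI_of_mem hR hRI a.2 hr b.2

theorem coe_span_subset_sup_tildeI :
    (TwoSidedIdeal.span (R : Set T) : Set T) ⊆ (R ⊔ tildeI 𝒜 (I : Set T) : AddSubgroup T) := by
  intro x hx
  rw [SetLike.mem_coe, TwoSidedIdeal.mem_span_iff_mem_addSubgroup_closure] at hx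
  refine (AddSubgroup.closure_le _).2 ?_ hx
  rintro _ ⟨_, ⟨a, -, r, hr, rfl⟩, b, -, rfl⟩
  exact hsg.mul_mul_mem_sup_tildeI hR hRI hr a b

end StronglyGraded

end tildeI

section Generation

variable {𝒜 : ℕ → AddSubgroup T} [GradedRing 𝒜] {I : TwoSidedIdeal T}
  (hI : ∀ x ∈ I, ∀ n, projFun 𝒜 n x ∈ I)
include hI

theorem projFun_mem_of_mem_tildeI (J : TwoSidedIdeal T) {n : ℕ}
    (hJ : ∀ m < n, ∀ x ∈ I, x ∈ 𝒜 m → x ∈ J) {z : T} (hz : z ∈ tildeI 𝒜 (I : Set T)) :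
    projFun 𝒜 n z ∈ J := by
  refine tildeI_le (G := (AddSubgroup.ofClass J).comap (GradedRing.proj 𝒜 n)) ?_ ?_ hz
  · intro a ha b hb
    change projFun 𝒜 n (a * b) ∈ J
    rcases n with _ | m
    · rw [projFun, coe_decompose_mul_of_right_mem_of_not_le 𝒜 hb (Nat.not_succ_le_zero 0)]
      exact zero_mem J
    · rw [projFun, coe_decompose_mul_of_right_mem_of_le 𝒜 hb (by omega), Nat.add_sub_cancel]
      exact J.mul_mem_right _ b (hJ m m.lt_succ_self _ (hI a ha m) (SetLike.coe_mem _))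
  · intro a ha b hb
    change projFun 𝒜 n (a * b) ∈ J
    rcases n with _ | m
    · rw [projFun, coe_decompose_mul_of_left_mem_of_not_le 𝒜 ha (Nat.not_succ_le_zero 0)]
      exact zero_mem J
    · rw [projFun, coe_decompose_mul_of_left_mem_of_le 𝒜 ha (by omega), Nat.add_sub_cancel]
      exact J.mul_mem_left a _ (hJ m m.lt_succ_self _ (hI b hb m) (SetLike.coe_mem _))

variable {R : AddSubgroup T} (hR : ∀ x ∈ R, ∀ n, projFun 𝒜 n x ∈ R)
  (hsup : (I : Set T) ⊆ (R ⊔ tildeI 𝒜 (I : Set T) : AddSubgroup T))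
include hR hsup

theorem mem_span_of_mem_of_mem_grade (n : ℕ) :
    ∀ x ∈ I, x ∈ 𝒜 n → x ∈ TwoSidedIdeal.span (R : Set T) := by
  induction n using Nat.strong_induction_on with
  | _ n ih =>
    intro x hx hxn
    obtain ⟨r, hr, y, hy, rfl⟩ := AddSubgroup.mem_sup.1 (hsup hx)
    have hproj : r + y = projFun 𝒜 n r + projFun 𝒜 n y := by
      rw [← projFun_add]
      exact (decompose_of_mem_same 𝒜 hxn).symm
    rw [hproj]
    exact add_mem (TwoSidedIdeal.subset_span (hR r hr n))
      (projFun_mem_of_mem_tildeI hI _ ih hy)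

theorem le_span_of_subset_sup_tildeI : I ≤ TwoSidedIdeal.span (R : Set T) := by
  classical
  intro x hx
  rw [← sum_support_decompose 𝒜 x]
  exact sum_mem fun i _ =>
    mem_span_of_mem_of_mem_grade hI hR hsup i _ (hI x hx i) (SetLike.coe_mem _)

end Generation

/-- Lemma 2.10. -/
theorem stmt_10 (𝒜 : ℕ → AddSubgroup T) [GradedRing 𝒜] (hsg : StronglyGraded 𝒜)
    (I : TwoSidedIdeal T) (hIgr : ∀ x ∈ I, ∀ n, projFun 𝒜 n x ∈ I)
    (R : AddSubgroup T) (hRbi : IsSubbimodule 𝒜 R)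
    (hRgr : ∀ x ∈ R, ∀ n, projFun 𝒜 n x ∈ R)
    (hRI : (R : Set T) ⊆ (I : Set T)) :
    TwoSidedIdeal.span (R : Set T) = I
      ↔ ((R ⊔ tildeI 𝒜 (I : Set T) : AddSubgroup T) : Set T) = (I : Set T) := by
  constructor
  · intro h
    have hspan := hsg.coe_span_subset_sup_tildeI hRbi hRI
    rw [h] at hspan
    exact Set.Subset.antisymm (sup_le (show R ≤ AddSubgroup.ofClass I from hRI)
      (tildeI_le_ofClass I)) hspan
  · intro h
    exact le_antisymm (TwoSidedIdeal.span_le.2 hRI)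
      (le_span_of_subset_sup_tildeI hIgr hRgr h.superset)
end

section
/- Let T be a connected strongly graded S-ring and P an S-subbimodule. Define P_0 := P ∩ T^0 and P_{n+1} := T^1 P_n + P_n T^1 + P^{≤n+1}. Then P_n = Σ_{i+j+k=n} T^{≤i} · P^{≤j} · T^{≤k} for all n, i.e. the recursively defined sequence coincides with the canonical filtration of the ideal ⟨P⟩. -/
variable {T : Type*} [Ring T]

/-- The subgroup generated by products `a * b` with `a ∈ A`, `b ∈ B`. -/
noncomputable def mulAdd (A B : AddSubgroup T) : AddSubgroup T :=
  AddSubgroup.closure {y : T | ∃ a ∈ A, ∃ b ∈ B, y = a * b}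

/-- The canonical filtration `P_n = Σ_{i+j+k=n} T^{≤i} P^{≤j} T^{≤k}` of the ideal `⟨P⟩`. -/
noncomputable def Pcan (𝒜 : ℕ → AddSubgroup T) [GradedRing 𝒜] (P : AddSubgroup T) (n : ℕ) :
    AddSubgroup T :=
  AddSubgroup.closure {x : T | ∃ i j k : ℕ, i + j + k = n ∧
    ∃ a ∈ degLE 𝒜 i, ∃ b ∈ P ⊓ degLE 𝒜 j, ∃ c ∈ degLE 𝒜 k, x = a * b * c}

/-- The recursively defined filtration `P_0 = P ∩ T^0`,
`P_{n+1} = T^1 P_n + P_n T^1 + P^{≤ n+1}`. -/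
noncomputable def Prec (𝒜 : ℕ → AddSubgroup T) [GradedRing 𝒜] (P : AddSubgroup T) :
    ℕ → AddSubgroup T
  | 0 => P ⊓ 𝒜 0
  | n + 1 => mulAdd (𝒜 1) (Prec 𝒜 P n) ⊔ mulAdd (Prec 𝒜 P n) (𝒜 1) ⊔ (P ⊓ degLE 𝒜 (n + 1))

/-!
Write `F` for the recursive sequence `Prec` and `G` for the canonical filtration `Pcan`.
`G` is stable under multiplication by `T^{≤ p}` on either side with a degree shift of `p`
and contains `P^{≤ n}`, so `F n ≤ G n` by induction on `n`. Conversely `F` is stable under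
`T^0` (because `P` is an `S`-bimodule) and, by definition, under `T^1` with a shift of one;
since `T^{p+1} = T^1 T^p`, it is then stable under every `T^p` with a shift of `p`, hence
under `T^{≤ p}` because `F` is increasing. As `P^{≤ j} ≤ F j`, every generator
`a * b * c` of `G n` lies in `F n`.
-/

section DegLE

variable (𝒜 : ℕ → AddSubgroup T) [GradedRing 𝒜]

lemma le_degLE {p n : ℕ} (hpn : p ≤ n) : 𝒜 p ≤ degLE 𝒜 n := fun _ hy m hm => by
  rw [projFun, DirectSum.decompose_of_mem_ne 𝒜 hy (by omega : p ≠ m)]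

lemma degLE_le {n : ℕ} {S : AddSubgroup T} (h : ∀ p ≤ n, 𝒜 p ≤ S) : degLE 𝒜 n ≤ S := by
  classical
  intro x hx
  rw [← DirectSum.sum_support_decompose 𝒜 x]
  refine sum_mem fun p _ => ?_
  by_cases hp : p ≤ n
  · exact h p hp (SetLike.coe_mem _)
  · have hzero : (DirectSum.decompose 𝒜 x p : T) = 0 := hx p (by omega)
    rw [hzero]
    exact zero_mem S

lemma degLE_mono {m n : ℕ} (h : m ≤ n) : degLE 𝒜 m ≤ degLE 𝒜 n :=
  degLE_le 𝒜 fun _ hp => le_degLE 𝒜 (hp.trans h)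

lemma degLE_zero : degLE 𝒜 0 = 𝒜 0 :=
  le_antisymm (degLE_le 𝒜 fun p hp => by rw [Nat.le_zero.mp hp]) (le_degLE 𝒜 le_rfl)

variable {𝒜}

lemma mul_mem_degLE {m n : ℕ} {x y : T} (hx : x ∈ degLE 𝒜 m) (hy : y ∈ degLE 𝒜 n) :
    x * y ∈ degLE 𝒜 (m + n) := by
  refine degLE_le 𝒜 (S := (degLE 𝒜 (m + n)).comap (AddMonoidHom.mulRight y))
    (fun p hp a ha => ?_) hx
  refine degLE_le 𝒜 (S := (degLE 𝒜 (m + n)).comap (AddMonoidHom.mulLeft a))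
    (fun q hq b hb => ?_) hy
  exact le_degLE 𝒜 (by omega) (SetLike.mul_mem_graded ha hb)

end DegLE

section MulAdd

variable {A B A' B' S : AddSubgroup T}

lemma mulAdd_le_iff : mulAdd A B ≤ S ↔ ∀ a ∈ A, ∀ b ∈ B, a * b ∈ S := by
  refine (AddSubgroup.closure_le S).trans ⟨fun h a ha b hb => h ⟨a, ha, b, hb, rfl⟩, ?_⟩
  rintro h _ ⟨a, ha, b, hb, rfl⟩
  exact h a ha b hb

lemma mul_mem_mulAdd {a b : T} (ha : a ∈ A) (hb : b ∈ B) : a * b ∈ mulAdd A B :=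
  AddSubgroup.subset_closure ⟨a, ha, b, hb, rfl⟩

lemma mulAdd_mono (hA : A ≤ A') (hB : B ≤ B') : mulAdd A B ≤ mulAdd A' B' :=
  mulAdd_le_iff.2 fun _ ha _ hb => mul_mem_mulAdd (hA ha) (hB hb)

end MulAdd

namespace StronglyGraded

variable {𝒜 : ℕ → AddSubgroup T} (hsg : StronglyGraded 𝒜) {F : ℕ → AddSubgroup T}
include hsg

lemma mul_mem_left (h0 : ∀ m, ∀ a ∈ 𝒜 0, ∀ x ∈ F m, a * x ∈ F m)
    (h1 : ∀ m, ∀ a ∈ 𝒜 1, ∀ x ∈ F m, a * x ∈ F (m + 1)) {p m : ℕ} {a x : T}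
    (ha : a ∈ 𝒜 p) (hx : x ∈ F m) : a * x ∈ F (p + m) := by
  induction p generalizing a with
  | zero => simpa using h0 m a ha x hx
  | succ p ih =>
    refine mulAdd_le_iff (S := (F (p + 1 + m)).comap (AddMonoidHom.mulRight x)) |>.2
      (fun a₁ ha₁ a' ha' => ?_) (hsg p ha)
    show a₁ * a' * x ∈ F (p + 1 + m)
    rw [mul_assoc, Nat.add_right_comm]
    exact h1 _ a₁ ha₁ _ (ih ha')

lemma mul_mem_right (h0 : ∀ m, ∀ x ∈ F m, ∀ c ∈ 𝒜 0, x * c ∈ F m)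
    (h1 : ∀ m, ∀ x ∈ F m, ∀ c ∈ 𝒜 1, x * c ∈ F (m + 1)) {q m : ℕ} {x c : T}
    (hc : c ∈ 𝒜 q) (hx : x ∈ F m) : x * c ∈ F (m + q) := by
  induction q generalizing m x c with
  | zero => simpa using h0 m x hx c hc
  | succ q ih =>
    refine mulAdd_le_iff (S := (F (m + (q + 1))).comap (AddMonoidHom.mulLeft x)) |>.2
      (fun c₁ hc₁ c' hc' => ?_) (hsg q hc)
    show x * (c₁ * c') ∈ F (m + (q + 1))
    rw [← mul_assoc, Nat.add_comm q, ← Nat.add_assoc]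
    exact ih hc' (h1 m x hx c₁ hc₁)

lemma mul_mem_left_of_mem_degLE [GradedRing 𝒜] (hF : Monotone F)
    (h0 : ∀ m, ∀ a ∈ 𝒜 0, ∀ x ∈ F m, a * x ∈ F m)
    (h1 : ∀ m, ∀ a ∈ 𝒜 1, ∀ x ∈ F m, a * x ∈ F (m + 1)) {p m : ℕ} {a x : T}
    (ha : a ∈ degLE 𝒜 p) (hx : x ∈ F m) : a * x ∈ F (p + m) :=
  degLE_le 𝒜 (S := (F (p + m)).comap (AddMonoidHom.mulRight x))
    (fun _ hq _ ha' => hF (by omega) (hsg.mul_mem_left h0 h1 ha' hx)) ha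

lemma mul_mem_right_of_mem_degLE [GradedRing 𝒜] (hF : Monotone F)
    (h0 : ∀ m, ∀ x ∈ F m, ∀ c ∈ 𝒜 0, x * c ∈ F m)
    (h1 : ∀ m, ∀ x ∈ F m, ∀ c ∈ 𝒜 1, x * c ∈ F (m + 1)) {q m : ℕ} {x c : T}
    (hc : c ∈ degLE 𝒜 q) (hx : x ∈ F m) : x * c ∈ F (m + q) :=
  degLE_le 𝒜 (S := (F (m + q)).comap (AddMonoidHom.mulLeft x))
    (fun _ hp _ hc' => hF (by omega) (hsg.mul_mem_right h0 h1 hc' hx)) hc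

end StronglyGraded

section Filtrations

variable {𝒜 : ℕ → AddSubgroup T} [GradedRing 𝒜] {P : AddSubgroup T}

lemma mem_Pcan {i j k n : ℕ} (h : i + j + k = n) {a b c : T} (ha : a ∈ degLE 𝒜 i)
    (hb : b ∈ P ⊓ degLE 𝒜 j) (hc : c ∈ degLE 𝒜 k) : a * b * c ∈ Pcan 𝒜 P n :=
  AddSubgroup.subset_closure ⟨i, j, k, h, a, ha, b, hb, c, hc, rfl⟩

lemma inf_degLE_le_Pcan (n : ℕ) : P ⊓ degLE 𝒜 n ≤ Pcan 𝒜 P n := fun b hb => by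
  have hone : (1 : T) ∈ degLE 𝒜 0 := le_degLE 𝒜 le_rfl SetLike.GradedOne.one_mem
  simpa using mem_Pcan (by omega) hone hb hone

lemma mul_mem_Pcan_left {p n : ℕ} {a x : T} (ha : a ∈ degLE 𝒜 p) (hx : x ∈ Pcan 𝒜 P n) :
    a * x ∈ Pcan 𝒜 P (p + n) := by
  refine (AddSubgroup.closure_le ((Pcan 𝒜 P (p + n)).comap (AddMonoidHom.mulLeft a))).2
    ?_ hx
  rintro _ ⟨i, j, k, rfl, a', ha', b, hb, c, hc, rfl⟩
  show a * (a' * b * c) ∈ Pcan 𝒜 P (p + (i + j + k))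
  rw [← mul_assoc, ← mul_assoc]
  exact mem_Pcan (by omega) (mul_mem_degLE ha ha') hb hc

lemma mul_mem_Pcan_right {q n : ℕ} {x c : T} (hc : c ∈ degLE 𝒜 q) (hx : x ∈ Pcan 𝒜 P n) :
    x * c ∈ Pcan 𝒜 P (n + q) := by
  refine (AddSubgroup.closure_le ((Pcan 𝒜 P (n + q)).comap (AddMonoidHom.mulRight c))).2
    ?_ hx
  rintro _ ⟨i, j, k, rfl, a, ha, b, hb, c', hc', rfl⟩
  show a * b * c' * c ∈ Pcan 𝒜 P (i + j + k + q)
  rw [mul_assoc (a * b)]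
  exact mem_Pcan (by omega) ha hb (mul_mem_degLE hc' hc)

lemma Prec_succ_le {n : ℕ} {S : AddSubgroup T}
    (hleft : ∀ a ∈ 𝒜 1, ∀ x ∈ Prec 𝒜 P n, a * x ∈ S)
    (hright : ∀ x ∈ Prec 𝒜 P n, ∀ c ∈ 𝒜 1, x * c ∈ S)
    (hP : P ⊓ degLE 𝒜 (n + 1) ≤ S) : Prec 𝒜 P (n + 1) ≤ S :=
  sup_le (sup_le (mulAdd_le_iff.2 hleft) (mulAdd_le_iff.2 hright)) hP

lemma mul_mem_Prec_succ_left {n : ℕ} {a x : T} (ha : a ∈ 𝒜 1) (hx : x ∈ Prec 𝒜 P n) :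
    a * x ∈ Prec 𝒜 P (n + 1) :=
  AddSubgroup.mem_sup_left (AddSubgroup.mem_sup_left (mul_mem_mulAdd ha hx))

lemma mul_mem_Prec_succ_right {n : ℕ} {x c : T} (hc : c ∈ 𝒜 1) (hx : x ∈ Prec 𝒜 P n) :
    x * c ∈ Prec 𝒜 P (n + 1) :=
  AddSubgroup.mem_sup_left (AddSubgroup.mem_sup_right (mul_mem_mulAdd hx hc))

lemma inf_degLE_le_Prec (n : ℕ) : P ⊓ degLE 𝒜 n ≤ Prec 𝒜 P n := by
  cases n with
  | zero => rw [degLE_zero]; rfl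
  | succ n => exact le_sup_right

lemma Prec_monotone : Monotone (Prec 𝒜 P) := by
  refine monotone_nat_of_le_succ fun n => ?_
  induction n with
  | zero => exact (inf_le_inf_left P (le_degLE 𝒜 zero_le_one)).trans (inf_degLE_le_Prec 1)
  | succ n ih =>
    exact Prec_succ_le (fun a ha x hx => mul_mem_Prec_succ_left ha (ih hx))
      (fun x hx c hc => mul_mem_Prec_succ_right hc (ih hx))
      ((inf_le_inf_left P (degLE_mono 𝒜 n.succ.le_succ)).trans (inf_degLE_le_Prec _))

lemma Prec_le_Pcan (n : ℕ) : Prec 𝒜 P n ≤ Pcan 𝒜 P n := by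
  induction n with
  | zero =>
    exact (inf_le_inf_left P (degLE_zero 𝒜).ge).trans (inf_degLE_le_Pcan 0)
  | succ n ih =>
    refine Prec_succ_le (fun a ha x hx => ?_)
      (fun x hx c hc => mul_mem_Pcan_right (le_degLE 𝒜 le_rfl hc) (ih hx))
      (inf_degLE_le_Pcan _)
    rw [Nat.add_comm]
    exact mul_mem_Pcan_left (le_degLE 𝒜 le_rfl ha) (ih hx)

variable (hP : IsSubbimodule 𝒜 P)
include hP

lemma mul_mem_Prec_of_mem_zero_left {n : ℕ} {a x : T} (ha : a ∈ 𝒜 0)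
    (hx : x ∈ Prec 𝒜 P n) : a * x ∈ Prec 𝒜 P n := by
  induction n generalizing x with
  | zero =>
    exact ⟨(hP a ha x hx.1).1, by simpa using SetLike.mul_mem_graded (A := 𝒜) ha hx.2⟩
  | succ n ih =>
    refine Prec_succ_le (S := (Prec 𝒜 P (n + 1)).comap (AddMonoidHom.mulLeft a))
      (fun a₁ ha₁ y hy => ?_) (fun y hy c hc => ?_) (fun b hb => ?_) hx
    · show a * (a₁ * y) ∈ Prec 𝒜 P (n + 1)
      rw [← mul_assoc]
      exact mul_mem_Prec_succ_left (by simpa using SetLike.mul_mem_graded ha ha₁) hy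
    · show a * (y * c) ∈ Prec 𝒜 P (n + 1)
      rw [← mul_assoc]
      exact mul_mem_Prec_succ_right hc (ih hy)
    · exact inf_degLE_le_Prec _
        ⟨(hP a ha b hb.1).1, by simpa using mul_mem_degLE (le_degLE 𝒜 le_rfl ha) hb.2⟩

lemma mul_mem_Prec_of_mem_zero_right {n : ℕ} {x c : T} (hc : c ∈ 𝒜 0)
    (hx : x ∈ Prec 𝒜 P n) : x * c ∈ Prec 𝒜 P n := by
  induction n generalizing x with
  | zero =>
    exact ⟨(hP c hc x hx.1).2, by simpa using SetLike.mul_mem_graded (A := 𝒜) hx.2 hc⟩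
  | succ n ih =>
    refine Prec_succ_le (S := (Prec 𝒜 P (n + 1)).comap (AddMonoidHom.mulRight c))
      (fun a ha y hy => ?_) (fun y hy c₁ hc₁ => ?_) (fun b hb => ?_) hx
    · show a * y * c ∈ Prec 𝒜 P (n + 1)
      rw [mul_assoc]
      exact mul_mem_Prec_succ_left ha (ih hy)
    · show y * c₁ * c ∈ Prec 𝒜 P (n + 1)
      rw [mul_assoc]
      exact mul_mem_Prec_succ_right (by simpa using SetLike.mul_mem_graded hc₁ hc) hy
    · exact inf_degLE_le_Prec _
        ⟨(hP c hc b hb.1).2, by simpa using mul_mem_degLE hb.2 (le_degLE 𝒜 le_rfl hc)⟩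

lemma Pcan_le_Prec (hsg : StronglyGraded 𝒜) (n : ℕ) : Pcan 𝒜 P n ≤ Prec 𝒜 P n := by
  refine (AddSubgroup.closure_le _).2 ?_
  rintro _ ⟨i, j, k, rfl, a, ha, b, hb, c, hc, rfl⟩
  have hbc : b * c ∈ Prec 𝒜 P (j + k) :=
    hsg.mul_mem_right_of_mem_degLE Prec_monotone
      (fun _ _ hx _ hc => mul_mem_Prec_of_mem_zero_right hP hc hx)
      (fun _ _ hx _ hc => mul_mem_Prec_succ_right hc hx) hc
      (inf_degLE_le_Prec j hb)
  rw [mul_assoc, Nat.add_assoc]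
  exact hsg.mul_mem_left_of_mem_degLE Prec_monotone
    (fun _ _ ha _ hx => mul_mem_Prec_of_mem_zero_left hP ha hx)
    (fun _ _ ha _ hx => mul_mem_Prec_succ_left ha hx) ha hbc

end Filtrations

/-- Remark 2.9: for a strongly graded `T`, the recursion computes the canonical
filtration of `⟨P⟩`. -/
theorem stmt_13 (𝒜 : ℕ → AddSubgroup T) [GradedRing 𝒜] (hsg : StronglyGraded 𝒜)
    (P : AddSubgroup T) (hP : IsSubbimodule 𝒜 P) :
    ∀ n, Prec 𝒜 P n = Pcan 𝒜 P n :=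
  fun n => le_antisymm (Prec_le_Pcan n) (Pcan_le_Prec hP hsg n)
end
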